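/- arXiv:2506.21128 — 2 statements merged into one kernel-verified Lean document; each statement's English description precedes it below -/
import Mathlib

section
/- Let V be a finite-dimensional real normed vector space that is positive definite as a metric space. Then every closed ball in V has finite magnitude if and only if there exist a point x ∈ V and a radius r > 0 such that the closed ball of radius r about x has finite magnitude. -/
open Metric TopologicalSpace Filter Topology Bornology
open scoped ENNReal NNReal

/-- The similarity matrix of a finite subset of a metric space. -/
noncomputable def simMatrix {X : Type*} [MetricSpace X] (s : Finset X) : Matrix s s ℝ :=
  fun i j => Real.exp (-dist (i : X) (j : X))

/-- A metric space is positive definite when every finite subspace has a positive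
definite similarity matrix. -/
def IsPosDefSpace (X : Type*) [MetricSpace X] : Prop :=
  ∀ s : Finset X, (simMatrix s).PosDef

/-- The magnitude of a finite subset of a metric space: the sum of the entries of the
inverse of its similarity matrix. -/
noncomputable def finMag {X : Type*} [MetricSpace X] (s : Finset X) : ℝ :=
  letI : DecidableEq X := Classical.decEq X
  ∑ i, ∑ j, (simMatrix s)⁻¹ i j

/-- The magnitude of a (compact) subset of a metric space, valued in `[0, ∞]`:
the supremum of the magnitudes of its finite subsets. -/
noncomputable def cMagE {X : Type*} [MetricSpace X] (K : Set X) : ℝ≥0∞ :=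
  ⨆ (s : Finset X) (_ : (s : Set X) ⊆ K), ENNReal.ofReal (finMag s)

/-- The real-valued magnitude of a (compact) subset of a metric space. -/
noncomputable def cMag {X : Type*} [MetricSpace X] (K : Set X) : ℝ :=
  (cMagE K).toReal

/-- A metric space is tractable when it is positive definite and all of its closed balls
are compact and of finite magnitude. -/
def Tractable (X : Type*) [MetricSpace X] : Prop :=
  IsPosDefSpace X ∧ (∀ (x : X) (r : ℝ), IsCompact (closedBall x r)) ∧
    ∀ (x : X) (r : ℝ), cMagE (closedBall x r) < ⊤

/-!
Magnitude is a variational quantity: if `M` is positive semidefinite and `M u = 1`, then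
`2 ∑ v - vᵀ M v ≤ ∑ u` for every `v`, with equality at `v = u`; the same bound holds for any
matrix pulled back from `M` along a map of index sets. Halving distances squares the similarity
matrix entrywise, so the similarity matrix of a finite set `s` is the pullback of the Kronecker
square of the similarity matrix of `f(s)` along `x ↦ (f x, f x)`, whose weighting is the tensor
square of the weighting of `f(s)`. Hence `mg(s) ≤ mg(f(s))²`. In a normed space the homothety of
ratio `1/2` maps the ball of radius `2r` into the ball of radius `r`, so finiteness of the magnitude
of one ball propagates to all balls of radius `2ᵏ r` around its centre, which exhaust the space.
-/

open Matrix
open scoped Kronecker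

lemma Fintype.sum_fiberwise_mul {m n R : Type*} [Fintype m] [Fintype n] [DecidableEq n]
    [NonUnitalNonAssocSemiring R] (ι : m → n) (w : m → R) (g : n → R) :
    ∑ p, (∑ x with ι x = p, w x) * g p = ∑ x, w x * g (ι x) := by
  simp_rw [Finset.sum_mul]
  rw [← Finset.sum_fiberwise Finset.univ ι (fun x => w x * g (ι x))]
  refine Finset.sum_congr rfl fun p _ => Finset.sum_congr rfl fun x hx => ?_
  rw [(Finset.mem_filter.mp hx).2]

namespace Matrix

variable {m n : Type*} [Fintype m] [Fintype n]

lemma PosSemidef.two_mul_sum_sub_le_sum {M : Matrix n n ℝ} (hM : M.PosSemidef) {u : n → ℝ}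
    (hu : M *ᵥ u = 1) (v : n → ℝ) : 2 * ∑ i, v i - v ⬝ᵥ M *ᵥ v ≤ ∑ i, u i := by
  have hsymm : ∀ x : n → ℝ, x ᵥ* M = M *ᵥ x := fun x => by
    rw [← mulVec_transpose, ← conjTranspose_eq_transpose_of_trivial, hM.isHermitian.eq]
  have hexpand : (v - u) ⬝ᵥ M *ᵥ (v - u) = v ⬝ᵥ M *ᵥ v - 2 * ∑ i, v i + ∑ i, u i := by
    simp only [mulVec_sub, sub_dotProduct, dotProduct_sub, hu, dotProduct_mulVec u, hsymm,
      dotProduct_one, one_dotProduct, Pi.sub_apply, Finset.sum_sub_distrib]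
    ring
  have hnonneg := hM.dotProduct_mulVec_nonneg (v - u)
  rw [star_trivial, hexpand] at hnonneg
  linarith

lemma PosSemidef.two_mul_sum_sub_submatrix_le_sum {M : Matrix n n ℝ} (hM : M.PosSemidef)
    {u : n → ℝ} (hu : M *ᵥ u = 1) (ι : m → n) (w : m → ℝ) :
    2 * ∑ i, w i - w ⬝ᵥ M.submatrix ι ι *ᵥ w ≤ ∑ i, u i := by
  classical
  set v : n → ℝ := fun p => ∑ x with ι x = p, w x
  have hsum : ∑ p, v p = ∑ x, w x := by
    simpa using Fintype.sum_fiberwise_mul ι w 1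
  have hmulVec : ∀ x, (M *ᵥ v) (ι x) = (M.submatrix ι ι *ᵥ w) x := fun x => by
    calc (M *ᵥ v) (ι x) = ∑ q, v q * M (ι x) q := by simp only [mulVec, dotProduct, mul_comm]
      _ = ∑ y, w y * M (ι x) (ι y) := Fintype.sum_fiberwise_mul ι w _
      _ = (M.submatrix ι ι *ᵥ w) x := by simp only [mulVec, dotProduct, submatrix_apply, mul_comm]
  have hquad : v ⬝ᵥ M *ᵥ v = w ⬝ᵥ M.submatrix ι ι *ᵥ w := by
    calc v ⬝ᵥ M *ᵥ v = ∑ x, w x * (M *ᵥ v) (ι x) := Fintype.sum_fiberwise_mul ι w _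
      _ = w ⬝ᵥ M.submatrix ι ι *ᵥ w := by simp only [hmulVec, dotProduct]
  simpa [hsum, hquad] using hM.two_mul_sum_sub_le_sum hu v

lemma kronecker_mulVec_mul {R : Type*} [CommSemiring R] (A : Matrix m m R) (B : Matrix n n R)
    (x : m → R) (y : n → R) :
    (A ⊗ₖ B) *ᵥ (fun p => x p.1 * y p.2) = fun p => (A *ᵥ x) p.1 * (B *ᵥ y) p.2 := by
  funext p
  simp only [mulVec, dotProduct, kroneckerMap_apply, Fintype.sum_prod_type, Finset.sum_mul_sum]
  exact Finset.sum_congr rfl fun _ _ => Finset.sum_congr rfl fun _ _ => by ring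

end Matrix

section Magnitude

variable {X Y : Type*} [MetricSpace X] [MetricSpace Y]

noncomputable def weighting (s : Finset X) : s → ℝ :=
  letI : DecidableEq X := Classical.decEq X
  (simMatrix s)⁻¹ *ᵥ 1

lemma simMatrix_mulVec_weighting (hX : IsPosDefSpace X) (s : Finset X) :
    simMatrix s *ᵥ weighting s = 1 := by
  let : DecidableEq X := Classical.decEq X
  rw [weighting, mulVec_mulVec, mul_nonsing_inv _ ((isUnit_iff_isUnit_det _).mp (hX s).isUnit),
    one_mulVec]

lemma finMag_eq_sum_weighting (s : Finset X) : finMag s = ∑ i, weighting s i := by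
  simp [finMag, weighting, mulVec, dotProduct]

lemma finMag_eq_dotProduct (hX : IsPosDefSpace X) (s : Finset X) :
    finMag s = weighting s ⬝ᵥ simMatrix s *ᵥ weighting s := by
  rw [simMatrix_mulVec_weighting hX, dotProduct_one, finMag_eq_sum_weighting]

lemma finMag_nonneg (hX : IsPosDefSpace X) (s : Finset X) : 0 ≤ finMag s := by
  simpa [finMag_eq_dotProduct hX] using (hX s).posSemidef.dotProduct_mulVec_nonneg (weighting s)

lemma finMag_le_sq_of_dist_eq_half (hX : IsPosDefSpace X) (hY : IsPosDefSpace Y) {f : X → Y}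
    (hf : ∀ a b, dist (f a) (f b) = dist a b / 2) {s : Finset X} {t : Finset Y}
    (hst : ∀ x ∈ s, f x ∈ t) : finMag s ≤ finMag t ^ 2 := by
  set ι : s → t × t := fun x => (⟨f x, hst x x.2⟩, ⟨f x, hst x x.2⟩)
  have hpull : (simMatrix t ⊗ₖ simMatrix t).submatrix ι ι = simMatrix s := by
    ext x y
    simp only [submatrix_apply, kroneckerMap_apply, simMatrix, ι, ← Real.exp_add, hf]
    ring_nf
  have hweight :
      (simMatrix t ⊗ₖ simMatrix t) *ᵥ (fun p => weighting t p.1 * weighting t p.2) = 1 := by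
    rw [kronecker_mulVec_mul, simMatrix_mulVec_weighting hY]
    ext
    simp
  have hbound := ((hY t).posSemidef.kronecker (hY t).posSemidef).two_mul_sum_sub_submatrix_le_sum
    hweight ι (weighting s)
  rw [hpull, ← finMag_eq_dotProduct hX, ← finMag_eq_sum_weighting, Fintype.sum_prod_type,
    ← Finset.sum_mul_sum, ← finMag_eq_sum_weighting] at hbound
  linarith

lemma ofReal_finMag_le_cMagE {s : Finset X} {K : Set X} (hs : (s : Set X) ⊆ K) :
    ENNReal.ofReal (finMag s) ≤ cMagE K :=
  le_iSup₂ (f := fun (s : Finset X) (_ : (s : Set X) ⊆ K) => ENNReal.ofReal (finMag s)) s hs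

lemma cMagE_mono {K L : Set X} (h : K ⊆ L) : cMagE K ≤ cMagE L :=
  iSup₂_le fun _ hs => ofReal_finMag_le_cMagE (hs.trans h)

lemma cMagE_le_sq_of_dist_eq_half (hX : IsPosDefSpace X) (hY : IsPosDefSpace Y) {f : X → Y}
    (hf : ∀ a b, dist (f a) (f b) = dist a b / 2) {K : Set X} {L : Set Y}
    (hKL : Set.MapsTo f K L) : cMagE K ≤ cMagE L ^ 2 := by
  classical
  refine iSup₂_le fun s hs => ?_
  have himage : ((s.image f : Finset Y) : Set Y) ⊆ L := by
    rw [Finset.coe_image]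
    exact (hKL.mono_left hs).image_subset
  calc ENNReal.ofReal (finMag s)
      ≤ ENNReal.ofReal (finMag (s.image f) ^ 2) :=
        ENNReal.ofReal_le_ofReal
          (finMag_le_sq_of_dist_eq_half hX hY hf fun x hx => Finset.mem_image_of_mem f hx)
    _ = ENNReal.ofReal (finMag (s.image f)) ^ 2 := ENNReal.ofReal_pow (finMag_nonneg hY _) 2
    _ ≤ cMagE L ^ 2 := by gcongr; exact ofReal_finMag_le_cMagE himage

end Magnitude

lemma dist_homothety_homothety {𝕜 W P : Type*} [NormedField 𝕜] [SeminormedAddCommGroup W]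
    [NormedSpace 𝕜 W] [PseudoMetricSpace P] [NormedAddTorsor W P] (x a b : P) (c : 𝕜) :
    dist (AffineMap.homothety x c a) (AffineMap.homothety x c b) = ‖c‖ * dist a b := by
  rw [AffineMap.homothety_apply, AffineMap.homothety_apply, dist_vadd_cancel_right, dist_smul₀,
    dist_vsub_cancel_right]

section NormedSpace

variable {V : Type*} [NormedAddCommGroup V] [NormedSpace ℝ V]

lemma cMagE_closedBall_two_mul_le (hpd : IsPosDefSpace V) (x : V) (r : ℝ) :
    cMagE (closedBall x (2 * r)) ≤ cMagE (closedBall x r) ^ 2 := by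
  have hhalf : ∀ a b : V, dist (AffineMap.homothety x (2⁻¹ : ℝ) a)
      (AffineMap.homothety x (2⁻¹ : ℝ) b) = dist a b / 2 := fun a b => by
    rw [dist_homothety_homothety, norm_inv, Real.norm_two, inv_mul_eq_div]
  refine cMagE_le_sq_of_dist_eq_half hpd hpd hhalf fun z hz => ?_
  rw [mem_closedBall, dist_comm] at hz
  rw [mem_closedBall, dist_homothety_center, norm_inv, Real.norm_two]
  linarith

lemma cMagE_closedBall_two_pow_mul_lt_top (hpd : IsPosDefSpace V) {x : V} {r : ℝ}
    (h : cMagE (closedBall x r) < ⊤) (k : ℕ) : cMagE (closedBall x (2 ^ k * r)) < ⊤ := by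
  induction k with
  | zero => simpa using h
  | succ k ih =>
    rw [pow_succ', mul_assoc]
    exact (cMagE_closedBall_two_mul_le hpd x _).trans_lt (ENNReal.pow_lt_top ih)

end NormedSpace

theorem stmt_2_general {V : Type*} [NormedAddCommGroup V] [NormedSpace ℝ V]
    (hpd : IsPosDefSpace V) :
    (∀ (x : V) (r : ℝ), cMagE (closedBall x r) < ⊤) ↔
      ∃ (x : V) (r : ℝ), 0 < r ∧ cMagE (closedBall x r) < ⊤ := by
  refine ⟨fun h => ⟨0, 1, one_pos, h 0 1⟩, ?_⟩
  rintro ⟨x, r, hr, hfin⟩ y R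
  obtain ⟨k, hk⟩ := pow_unbounded_of_one_lt ((dist y x + R) / r) one_lt_two
  have hsub : closedBall y R ⊆ closedBall x (2 ^ k * r) :=
    closedBall_subset_closedBall' (by linarith [(div_lt_iff₀ hr).mp hk])
  exact (cMagE_mono hsub).trans_lt (cMagE_closedBall_two_pow_mul_lt_top hpd hfin k)

/-- In a finite-dimensional, positive definite real normed vector space,
all closed balls have finite magnitude iff some closed ball of positive radius does. -/
theorem stmt_2 {V : Type*} [NormedAddCommGroup V] [NormedSpace ℝ V]
    [FiniteDimensional ℝ V] (hpd : IsPosDefSpace V) :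
    (∀ (x : V) (r : ℝ), cMagE (closedBall x r) < ⊤) ↔
      ∃ (x : V) (r : ℝ), 0 < r ∧ cMagE (closedBall x r) < ⊤ :=
  stmt_2_general hpd
end

section
/- The magnitude map on nonempty compact subsets of [0, ∞) ⊆ ℝ, equipped with the Hausdorff metric, is not uniformly continuous; likewise, the magnitude map on nonempty finite subsets of [0, ∞) is not uniformly continuous. In fact, for every ε > 0 and every δ > 0 there exist a nonempty finite set A ⊆ [0, ∞) and a nonempty compact set B ⊆ [0, ∞) with d_H(A, B) = δ and mg(B) − mg(A) > ε. -/
open Metric TopologicalSpace Filter Topology Bornology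
open scoped ENNReal NNReal

/-!
For points `a₀ < ⋯ < aₙ` of `ℝ` the similarity matrix `Z` satisfies `Z w = 1` for an explicit
weighting `w` with `∑ w = 1 + ∑ tanh ((aᵢ₊₁ - aᵢ) / 2)`, and
`det Z = ∏ (1 - e^{-2(aᵢ₊₁ - aᵢ)}) ≠ 0`. Both come from peeling off the first point: outside
column `0`, row `0` of `Z` is `e^{-(a₁ - a₀)}` times row `1`. Hence the magnitude of the finite
set is `1 + ∑ tanh (gap / 2)`.

Let `B` be the grid of step `δ` and `A` the grid of step `2δ` in `[0, 2Nδ]`, so that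
`d_H(A, B) = δ`. Then `mg B = 1 + 2N tanh (δ/2)`, while subadditivity of `tanh` on `[0, ∞)` bounds
the magnitude of every subset of `A` by `1 + N tanh δ`. As `tanh δ < 2 tanh (δ/2)`, the difference
grows linearly in `N`. Magnitude and Hausdorff distance are invariant under isometric embeddings,
so the same grids work in the subspace `[0, ∞)`.
-/

open Real Matrix

namespace Real

theorem tanh_add (x y : ℝ) : tanh (x + y) = (tanh x + tanh y) / (1 + tanh x * tanh y) := by
  have hx := (cosh_pos x).ne'
  have hy := (cosh_pos y).ne'
  simp only [tanh_eq_sinh_div_cosh, sinh_add, cosh_add]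
  field_simp

theorem tanh_nonneg {x : ℝ} (hx : 0 ≤ x) : 0 ≤ tanh x := by
  rw [tanh_eq_sinh_div_cosh]
  exact div_nonneg (sinh_nonneg_iff.2 hx) (cosh_pos x).le

theorem tanh_pos {x : ℝ} (hx : 0 < x) : 0 < tanh x := by
  rw [tanh_eq_sinh_div_cosh]
  exact div_pos (sinh_pos_iff.2 hx) (cosh_pos x)

theorem tanh_add_le {x y : ℝ} (hx : 0 ≤ x) (hy : 0 ≤ y) : tanh (x + y) ≤ tanh x + tanh y := by
  rw [tanh_add]
  exact div_le_self (add_nonneg (tanh_nonneg hx) (tanh_nonneg hy))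
    (le_add_of_nonneg_right (mul_nonneg (tanh_nonneg hx) (tanh_nonneg hy)))

theorem tanh_natCast_mul_le {x : ℝ} (hx : 0 ≤ x) (k : ℕ) : tanh (k * x) ≤ k * tanh x := by
  induction k with
  | zero => simp
  | succ k ih =>
    rw [Nat.cast_succ, add_mul, one_mul, add_mul, one_mul]
    exact (tanh_add_le (by positivity) hx).trans (by linarith)

theorem tanh_two_mul_lt {x : ℝ} (hx : 0 < x) : tanh (2 * x) < 2 * tanh x := by
  have ht := tanh_pos hx
  rw [two_mul, tanh_add, ← two_mul, div_lt_iff₀ (by positivity)]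
  nlinarith [mul_pos ht (mul_pos ht ht)]

theorem exp_neg_two_mul_mul_one_add_tanh (x : ℝ) :
    exp (-(2 * x)) * (1 + tanh x) = 1 - tanh x := by
  have hc := (cosh_pos x).ne'
  rw [tanh_eq_sinh_div_cosh]
  field_simp
  rw [cosh_add_sinh, cosh_sub_sinh, ← exp_add]
  ring_nf

end Real

theorem Fin.sum_succ_sub_castSucc {M : Type*} [AddCommGroup M] :
    ∀ {n : ℕ} (g : Fin (n + 1) → M), ∑ i : Fin n, (g i.succ - g i.castSucc) = g (last n) - g 0
  | 0, _ => by simp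
  | n + 1, g => by
    rw [sum_univ_castSucc]
    simp only [succ_castSucc]
    rw [Fin.sum_succ_sub_castSucc (fun i => g i.castSucc)]
    simp only [succ_last, castSucc_zero]
    abel

theorem Matrix.sum_inv_eq_sum_of_mulVec_eq_one {ι : Type*} [Fintype ι] [DecidableEq ι]
    {A : Matrix ι ι ℝ} (hA : IsUnit A.det) {w : ι → ℝ} (hw : A *ᵥ w = 1) :
    ∑ i, ∑ j, A⁻¹ i j = ∑ i, w i := by
  have : w = A⁻¹ *ᵥ 1 := by rw [← hw, mulVec_mulVec, nonsing_inv_mul _ hA, one_mulVec]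
  simp [this, mulVec, dotProduct]

noncomputable def simMatrixOf {ι X : Type*} [MetricSpace X] (x : ι → X) : Matrix ι ι ℝ :=
  Matrix.of fun i j => exp (-dist (x i) (x j))

section Line

variable {n : ℕ}

theorem dist_zero_succ_of_monotone {x : Fin (n + 2) → ℝ} (hx : Monotone x) (j : Fin (n + 1)) :
    dist (x 0) (x j.succ) = (x 1 - x 0) + dist (x 1) (x j.succ) := by
  have h01 : x 0 ≤ x 1 := hx (Fin.zero_le _)
  have h1j : x 1 ≤ x j.succ := hx (by simpa using Fin.succ_le_succ_iff.2 (Fin.zero_le j))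
  rw [Real.dist_eq, Real.dist_eq, abs_of_nonpos (by linarith), abs_of_nonpos (by linarith)]
  ring

theorem simMatrixOf_succ_succ (x : Fin (n + 2) → ℝ) (i j : Fin (n + 1)) :
    simMatrixOf x i.succ j.succ = simMatrixOf (Fin.tail x) i j :=
  rfl

theorem simMatrixOf_zero_succ {x : Fin (n + 2) → ℝ} (hx : Monotone x) (j : Fin (n + 1)) :
    simMatrixOf x 0 j.succ = exp (-(x 1 - x 0)) * simMatrixOf (Fin.tail x) 0 j := by
  simp only [simMatrixOf, of_apply, Fin.tail, Fin.succ_zero_eq_one,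
    dist_zero_succ_of_monotone hx, neg_add, exp_add]

theorem simMatrixOf_succ_zero {x : Fin (n + 2) → ℝ} (hx : Monotone x) (i : Fin (n + 1)) :
    simMatrixOf x i.succ 0 = exp (-(x 1 - x 0)) * simMatrixOf (Fin.tail x) i 0 := by
  simp only [simMatrixOf, of_apply, dist_comm (x i.succ), dist_comm (Fin.tail x i)]
  exact simMatrixOf_zero_succ hx i

theorem det_simMatrixOf_succ {x : Fin (n + 2) → ℝ} (hx : Monotone x) :
    (simMatrixOf x).det = (1 - exp (-(x 1 - x 0)) ^ 2) * (simMatrixOf (Fin.tail x)).det := by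
  obtain ⟨t, ht⟩ : ∃ t, exp (-(x 1 - x 0)) = t := ⟨_, rfl⟩
  -- Subtracting `t` times row `1` from row `0` leaves `(1 - t ^ 2, 0, …, 0)` in row `0`.
  rw [ht, ← det_updateRow_add_smul_self (simMatrixOf x) (i := 0) (j := 1) (by simp) (-t),
    det_succ_row_zero, Fin.sum_univ_succ]
  have hrow : ∀ j : Fin (n + 1),
      updateRow (simMatrixOf x) 0 (simMatrixOf x 0 + -t • simMatrixOf x 1) 0 j.succ = 0 := by
    intro j
    rw [updateRow_self, Pi.add_apply, Pi.smul_apply, smul_eq_mul, simMatrixOf_zero_succ hx, ht,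
      ← Fin.succ_zero_eq_one, simMatrixOf_succ_succ]
    ring
  have hcorner :
      updateRow (simMatrixOf x) 0 (simMatrixOf x 0 + -t • simMatrixOf x 1) 0 0 = 1 - t ^ 2 := by
    rw [updateRow_self, Pi.add_apply, Pi.smul_apply, smul_eq_mul, ← Fin.succ_zero_eq_one,
      simMatrixOf_succ_zero hx, ht]
    simp [simMatrixOf]
    ring
  simp only [hrow, mul_zero, zero_mul, Finset.sum_const_zero, add_zero, hcorner,
    Fin.succAbove_zero, Fin.val_zero, pow_zero, one_mul]
  rfl

theorem det_simMatrixOf_ne_zero :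
    ∀ {n : ℕ} {x : Fin (n + 1) → ℝ}, StrictMono x → (simMatrixOf x).det ≠ 0
  | 0, x, _ => by simp [det_unique, simMatrixOf]
  | n + 1, x, hx => by
    rw [det_simMatrixOf_succ hx.monotone]
    have ht : exp (-(x 1 - x 0)) < 1 := exp_lt_one_iff.2 (by linarith [hx Fin.zero_lt_one])
    have ht0 := exp_pos (-(x 1 - x 0))
    exact mul_ne_zero (by nlinarith) (det_simMatrixOf_ne_zero (hx.comp Fin.strictMono_succ))

theorem simMatrixOf_mulVec_cons (x : Fin (n + 2) → ℝ) (a c : ℝ) (w : Fin (n + 1) → ℝ)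
    (i : Fin (n + 2)) :
    (simMatrixOf x *ᵥ Fin.cons a (w - Pi.single 0 c)) i
      = simMatrixOf x i 0 * a + ∑ j, simMatrixOf x i j.succ * w j - simMatrixOf x i 1 * c := by
  simp [mulVec, dotProduct, Fin.sum_univ_succ (n := n + 1), mul_sub, Finset.sum_sub_distrib,
    Pi.single_apply]
  ring

end Line

theorem exists_simMatrixOf_mulVec_eq_one : ∀ {n : ℕ} {x : Fin (n + 1) → ℝ}, Monotone x →
    ∃ w, simMatrixOf x *ᵥ w = 1 ∧
      ∑ i, w i = 1 + ∑ i : Fin n, tanh ((x i.succ - x i.castSucc) / 2)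
  | 0, x, _ =>
    ⟨1, by ext i; simp [mulVec, dotProduct, simMatrixOf, Fin.fin_one_eq_zero i], by simp⟩
  | n + 1, x, hx => by
    obtain ⟨w, hw, hsum⟩ :=
      exists_simMatrixOf_mulVec_eq_one (x := Fin.tail x) (hx.comp Fin.strictMono_succ.monotone)
    have hw' : ∀ k, ∑ j, simMatrixOf (Fin.tail x) k j * w j = 1 := fun k => by
      simpa [mulVec, dotProduct] using congrFun hw k
    set τ := tanh ((x 1 - x 0) / 2)
    have hτ : exp (-(x 1 - x 0)) * (1 + τ) = 1 - τ := by
      simpa [mul_div_cancel₀] using exp_neg_two_mul_mul_one_add_tanh ((x 1 - x 0) / 2)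
    -- The new point gets weight `(1 + τ) / 2` and takes `(1 - τ) / 2` off the weight of `x 1`;
    -- every row identity then reduces to `hτ`.
    refine ⟨Fin.cons ((1 + τ) / 2) (w - Pi.single 0 ((1 - τ) / 2)), ?_, ?_⟩
    · ext i
      rw [simMatrixOf_mulVec_cons, Pi.one_apply]
      refine Fin.cases ?_ (fun k => ?_) i
      · have h0 : ∑ j, simMatrixOf x 0 j.succ * w j = exp (-(x 1 - x 0)) := by
          simp only [simMatrixOf_zero_succ hx, mul_assoc, ← Finset.mul_sum, hw', mul_one]
        have h01 : simMatrixOf x 0 1 = exp (-(x 1 - x 0)) := by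
          simpa [simMatrixOf] using simMatrixOf_zero_succ hx 0
        rw [h0, h01]
        simp only [simMatrixOf, of_apply, dist_self, neg_zero, exp_zero]
        linear_combination (1 / 2 : ℝ) * hτ
      · have h1 : simMatrixOf x k.succ 1 = simMatrixOf (Fin.tail x) k 0 :=
          simMatrixOf_succ_succ x k 0
        simp only [simMatrixOf_succ_zero hx, h1, simMatrixOf_succ_succ, hw']
        linear_combination (simMatrixOf (Fin.tail x) k 0 / 2) * hτ
    · simp only [Fin.sum_cons, Pi.sub_apply]
      rw [Finset.sum_sub_distrib, Fintype.sum_pi_single', hsum, Fin.sum_univ_succ]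
      simp only [Fin.tail, Fin.succ_castSucc, Fin.succ_zero_eq_one, Fin.castSucc_zero, τ]
      ring

theorem sum_inv_simMatrixOf_of_strictMono {n : ℕ} {x : Fin (n + 1) → ℝ} (hx : StrictMono x) :
    ∑ i, ∑ j, (simMatrixOf x)⁻¹ i j = 1 + ∑ i : Fin n, tanh ((x i.succ - x i.castSucc) / 2) := by
  obtain ⟨w, hw, hsum⟩ := exists_simMatrixOf_mulVec_eq_one hx.monotone
  exact (sum_inv_eq_sum_of_mulVec_eq_one (det_simMatrixOf_ne_zero hx).isUnit hw).trans hsum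

theorem finMag_eq_sum_inv_simMatrixOf {X ι : Type*} [MetricSpace X] [Fintype ι] [DecidableEq ι]
    (s : Finset X) (e : ι ≃ s) :
    finMag s = ∑ i, ∑ j, (simMatrixOf fun i => (e i : X))⁻¹ i j := by
  classical
  have hsim : simMatrix s = (simMatrixOf fun i => (e i : X)).submatrix e.symm e.symm := by
    ext a b
    simp [simMatrix, simMatrixOf]
  rw [finMag, hsim, inv_submatrix_equiv]
  exact Fintype.sum_equiv e.symm _ _ fun a => Fintype.sum_equiv e.symm _ _ fun b => rfl

theorem finMag_image_of_strictMono {n : ℕ} {x : Fin (n + 1) → ℝ} (hx : StrictMono x) :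
    finMag (Finset.univ.image x) = 1 + ∑ i : Fin n, tanh ((x i.succ - x i.castSucc) / 2) := by
  have hmap : Finset.univ.image x = Finset.univ.map ⟨x, hx.injective⟩ := by
    ext
    simp
  rw [hmap, finMag_eq_sum_inv_simMatrixOf _
    ((Equiv.subtypeUnivEquiv Finset.mem_univ).symm.trans (Finset.univ.equivMap _))]
  exact sum_inv_simMatrixOf_of_strictMono hx

section Isometry

variable {X Y : Type*} [MetricSpace X] [MetricSpace Y]

theorem finMag_map_of_isometry (f : X ↪ Y) (hf : Isometry f) (s : Finset X) :
    finMag (s.map f) = finMag s := by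
  classical
  rw [finMag_eq_sum_inv_simMatrixOf _ (s.equivMap f),
    finMag_eq_sum_inv_simMatrixOf s (Equiv.refl s)]
  have hsim : simMatrixOf (fun i => (s.equivMap f i : Y))
      = simMatrixOf fun i => (Equiv.refl s i : X) := by
    ext i j
    simp [simMatrixOf, hf.dist_eq]
  rw [hsim]

theorem cMagE_image_of_isometry {f : X → Y} (hf : Isometry f) (K : Set X) :
    cMagE (f '' K) = cMagE K := by
  classical
  have hmag : ∀ t : Finset X, finMag (t.image f) = finMag t := fun t => by
    have : t.image f = t.map ⟨f, hf.injective⟩ := by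
      ext
      simp
    rw [this, finMag_map_of_isometry _ hf]
  apply le_antisymm
  · refine iSup₂_le fun s hs => ?_
    obtain ⟨t, htK, rfl⟩ := Finset.subset_set_image_iff.1 hs
    rw [hmag]
    exact le_iSup₂_of_le (f := fun (t : Finset X) (_ : (t : Set X) ⊆ K) => _) t htK le_rfl
  · refine iSup₂_le fun t ht => ?_
    rw [← hmag]
    exact le_iSup₂_of_le (f := fun (s : Finset Y) (_ : (s : Set Y) ⊆ f '' K) => _) (t.image f)
      (by simpa using Set.image_mono ht) le_rfl

theorem cMag_image_of_isometry {f : X → Y} (hf : Isometry f) (K : Set X) :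
    cMag (f '' K) = cMag K := by
  rw [cMag, cMag, cMagE_image_of_isometry hf]

end Isometry

section Bounds

variable {X : Type*} [MetricSpace X] {K : Set X}

theorem cMagE_le_ofReal {c : ℝ} (h : ∀ s : Finset X, ↑s ⊆ K → s.Nonempty → finMag s ≤ c) :
    cMagE K ≤ ENNReal.ofReal c := by
  refine iSup₂_le fun s hs => ?_
  rcases s.eq_empty_or_nonempty with rfl | hne
  · simp [finMag]
  · exact ENNReal.ofReal_le_ofReal (h s hs hne)

theorem finMag_le_cMag {s : Finset X} (hs : ↑s ⊆ K) (hK : cMagE K ≠ ⊤) : finMag s ≤ cMag K :=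
  (ENNReal.ofReal_le_iff_le_toReal hK).1
    (le_iSup₂_of_le (f := fun (s : Finset X) (_ : (s : Set X) ⊆ K) => _) s hs le_rfl)

end Bounds

noncomputable def grid (h : ℝ) (M : ℕ) : Finset ℝ :=
  Finset.univ.image fun k : Fin (M + 1) => ((k : ℕ) : ℝ) * h

section Grid

variable {h : ℝ} {M : ℕ}

theorem mem_grid {y : ℝ} : y ∈ grid h M ↔ ∃ k : ℕ, k ≤ M ∧ (k : ℝ) * h = y := by
  simp [grid, Fin.exists_iff]

theorem grid_nonempty : (grid h M).Nonempty :=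
  Finset.univ_nonempty.image _

theorem grid_subset_Ici (hh : 0 ≤ h) : (grid h M : Set ℝ) ⊆ Set.Ici 0 := by
  intro y hy
  obtain ⟨k, -, rfl⟩ := mem_grid.1 hy
  exact Set.mem_Ici.2 (by positivity)

theorem finMag_grid (hh : 0 < h) : finMag (grid h M) = 1 + M * tanh (h / 2) := by
  rw [grid, finMag_image_of_strictMono fun a b hab => by gcongr; exact hab]
  simp only [Fin.val_succ, Fin.val_castSucc, Nat.cast_add, Nat.cast_one, add_mul, one_mul,
    add_sub_cancel_left, Finset.sum_const, Finset.card_univ, Fintype.card_fin, nsmul_eq_mul]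

theorem finMag_le_of_subset_grid (hh : 0 < h) {s : Finset ℝ} (hs : s ⊆ grid h M)
    (hne : s.Nonempty) : finMag s ≤ 1 + M * tanh (h / 2) := by
  obtain ⟨n, hn⟩ : ∃ n, s.card = n + 1 := ⟨s.card - 1, by have := hne.card_pos; omega⟩
  set x := s.orderEmbOfFin hn
  rw [← s.image_orderEmbOfFin_univ hn, finMag_image_of_strictMono x.strictMono]
  choose m hmM hm using fun i => mem_grid.1 (hs (s.orderEmbOfFin_mem hn i))
  have hgap : ∀ i : Fin n, tanh ((x i.succ - x i.castSucc) / 2)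
      ≤ (x i.succ - x i.castSucc) / h * tanh (h / 2) := by
    intro i
    have hlt : m i.castSucc < m i.succ := by
      have := x.strictMono (Fin.castSucc_lt_succ (i := i))
      rw [← hm, ← hm] at this
      exact_mod_cast lt_of_mul_lt_mul_right this hh.le
    have hk : x i.succ - x i.castSucc = ((m i.succ - m i.castSucc : ℕ) : ℝ) * h := by
      rw [← hm, ← hm, Nat.cast_sub hlt.le]
      ring
    rw [hk, mul_div_cancel_right₀ _ hh.ne', mul_div_assoc]
    exact tanh_natCast_mul_le (by positivity) _
  have hspan : (x (Fin.last n) - x 0) / h ≤ M := by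
    rw [← hm, ← hm, div_le_iff₀ hh]
    nlinarith [(Nat.cast_le (α := ℝ)).2 (hmM (Fin.last n)), (Nat.cast_nonneg (α := ℝ) (m 0))]
  calc 1 + ∑ i : Fin n, tanh ((x i.succ - x i.castSucc) / 2)
      ≤ 1 + ∑ i : Fin n, (x i.succ - x i.castSucc) / h * tanh (h / 2) := by
        gcongr with i
        exact hgap i
    _ = 1 + (x (Fin.last n) - x 0) / h * tanh (h / 2) := by
        rw [← Finset.sum_mul, ← Finset.sum_div, Fin.sum_succ_sub_castSucc]
    _ ≤ 1 + M * tanh (h / 2) := by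
        gcongr
        exact tanh_nonneg (by positivity)

theorem cMag_grid (hh : 0 < h) : cMag (grid h M : Set ℝ) = 1 + M * tanh (h / 2) := by
  have hbound : cMagE (grid h M : Set ℝ) ≤ ENNReal.ofReal (1 + M * tanh (h / 2)) :=
    cMagE_le_ofReal fun s hs hne => finMag_le_of_subset_grid hh (Finset.coe_subset.1 hs) hne
  refine le_antisymm (ENNReal.toReal_le_of_le_ofReal ?_ hbound) ?_
  · have := tanh_nonneg (x := h / 2) (by positivity)
    positivity
  · rw [← finMag_grid hh]
    exact finMag_le_cMag subset_rfl (ne_top_of_le_ne_top ENNReal.ofReal_ne_top hbound)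

theorem hausdorffDist_grid_two_mul (hh : 0 ≤ h) (hM : M ≠ 0) :
    hausdorffDist (grid (2 * h) M : Set ℝ) (grid h (2 * M)) = h := by
  refine le_antisymm (hausdorffDist_le_of_mem_dist hh ?_ ?_) ?_
  · rintro _ hy
    obtain ⟨k, hk, rfl⟩ := mem_grid.1 hy
    refine ⟨(2 * k : ℕ) * h, mem_grid.2 ⟨2 * k, by omega, rfl⟩, ?_⟩
    simp [mul_assoc, mul_left_comm, hh]
  · rintro _ hy
    obtain ⟨j, hj, rfl⟩ := mem_grid.1 hy
    refine ⟨(j / 2 : ℕ) * (2 * h), mem_grid.2 ⟨j / 2, by omega, rfl⟩, ?_⟩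
    have hj2 : (j : ℝ) = 2 * (j / 2 : ℕ) + (j % 2 : ℕ) := by
      exact_mod_cast (Nat.div_add_mod j 2).symm
    have hmod : ((j % 2 : ℕ) : ℝ) ≤ 1 := by
      exact_mod_cast Nat.le_of_lt_succ (Nat.mod_lt j two_pos)
    rw [Real.dist_eq, hj2, show (2 * ((j / 2 : ℕ) : ℝ) + (j % 2 : ℕ)) * h - (j / 2 : ℕ) * (2 * h)
      = (j % 2 : ℕ) * h by ring, abs_of_nonneg (by positivity)]
    nlinarith
  · have hmem : h ∈ (grid h (2 * M) : Set ℝ) := mem_grid.2 ⟨1, by omega, by simp⟩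
    have hfin : hausdorffEDist (grid h (2 * M) : Set ℝ) (grid (2 * h) M) ≠ ⊤ :=
      hausdorffEDist_ne_top_of_nonempty_of_bounded grid_nonempty grid_nonempty
        (Finset.finite_toSet _).isBounded (Finset.finite_toSet _).isBounded
    rw [hausdorffDist_comm]
    refine le_trans ?_ (infDist_le_hausdorffDist_of_mem hmem hfin)
    refine (le_infDist grid_nonempty).2 fun y hy => ?_
    obtain ⟨k, -, rfl⟩ := mem_grid.1 hy
    have hk : 1 ≤ |1 - 2 * (k : ℝ)| := by
      rcases Nat.eq_zero_or_pos k with rfl | hk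
      · simp
      · have : (1 : ℝ) ≤ k := Nat.one_le_cast.2 hk
        rw [abs_sub_comm, abs_of_nonneg (by linarith)]
        linarith
    rw [Real.dist_eq, show h - k * (2 * h) = (1 - 2 * k) * h by ring, abs_mul, abs_of_nonneg hh]
    exact le_mul_of_one_le_left hh hk

end Grid

theorem exists_grid_cMag_gap (ε : ℝ) {δ : ℝ} (hδ : 0 < δ) :
    ∃ N : ℕ, N ≠ 0 ∧ ε < cMag (grid δ (2 * N) : Set ℝ) - cMag (grid (2 * δ) N : Set ℝ) := by
  have hc : 0 < 2 * tanh (δ / 2) - tanh δ := by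
    have := tanh_two_mul_lt (half_pos hδ)
    rw [mul_div_cancel₀ _ two_ne_zero] at this
    linarith
  obtain ⟨N, hN⟩ := exists_nat_gt (ε / (2 * tanh (δ / 2) - tanh δ))
  refine ⟨N + 1, N.succ_ne_zero, ?_⟩
  rw [cMag_grid hδ, cMag_grid (by positivity), mul_div_cancel_left₀ _ two_ne_zero]
  have := (div_lt_iff₀ hc).1 (hN.trans (lt_add_one (N : ℝ)))
  push_cast
  linarith

section NonemptyCompactsOfFinset

variable {X : Type*} [MetricSpace X] {S : Set X}

def nonemptyCompactsOfFinset (A : Finset X) (hA : ↑A ⊆ S) (hne : A.Nonempty) :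
    NonemptyCompacts S where
  carrier := (Subtype.val : S → X) ⁻¹' A
  isCompact' := (A.finite_toSet.preimage Subtype.val_injective.injOn).isCompact
  nonempty' := let ⟨a, ha⟩ := hne; ⟨⟨a, hA ha⟩, ha⟩

theorem finite_nonemptyCompactsOfFinset (A : Finset X) (hA : ↑A ⊆ S) (hne : A.Nonempty) :
    (nonemptyCompactsOfFinset A hA hne : Set S).Finite :=
  Set.Finite.preimage (f := (Subtype.val : S → X)) Subtype.val_injective.injOn A.finite_toSet

theorem image_val_nonemptyCompactsOfFinset (A : Finset X) (hA : ↑A ⊆ S) (hne : A.Nonempty) :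
    Subtype.val '' (nonemptyCompactsOfFinset A hA hne : Set S) = (A : Set X) :=
  Set.image_preimage_eq_of_subset (f := Subtype.val) (s := (A : Set X))
    (by rwa [Subtype.range_coe])

theorem cMag_nonemptyCompactsOfFinset (A : Finset X) (hA : ↑A ⊆ S) (hne : A.Nonempty) :
    cMag (nonemptyCompactsOfFinset A hA hne : Set S) = cMag (A : Set X) := by
  rw [← image_val_nonemptyCompactsOfFinset A hA hne, cMag_image_of_isometry isometry_subtype_coe]

theorem dist_nonemptyCompactsOfFinset (A B : Finset X) (hA : ↑A ⊆ S) (hB : ↑B ⊆ S)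
    (hAne : A.Nonempty) (hBne : B.Nonempty) :
    dist (nonemptyCompactsOfFinset A hA hAne) (nonemptyCompactsOfFinset B hB hBne)
      = hausdorffDist (A : Set X) B := by
  rw [NonemptyCompacts.dist_eq, ← hausdorffDist_image isometry_subtype_coe,
    image_val_nonemptyCompactsOfFinset, image_val_nonemptyCompactsOfFinset]

end NonemptyCompactsOfFinset

theorem exists_nonemptyCompacts_Ici_cMag_gap (ε : ℝ) {δ : ℝ} (hδ : 0 < δ) :
    ∃ K L : NonemptyCompacts (Set.Ici (0 : ℝ)),
      (K : Set (Set.Ici (0 : ℝ))).Finite ∧ (L : Set (Set.Ici (0 : ℝ))).Finite ∧ dist K L = δ ∧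
      ε < cMag (L : Set (Set.Ici (0 : ℝ))) - cMag (K : Set (Set.Ici (0 : ℝ))) := by
  obtain ⟨N, hN, hgap⟩ := exists_grid_cMag_gap ε hδ
  have hA := grid_subset_Ici (M := N) (mul_pos two_pos hδ).le
  have hB := grid_subset_Ici (M := 2 * N) hδ.le
  refine ⟨nonemptyCompactsOfFinset _ hA grid_nonempty,
    nonemptyCompactsOfFinset _ hB grid_nonempty,
    finite_nonemptyCompactsOfFinset _ _ _, finite_nonemptyCompactsOfFinset _ _ _, ?_, ?_⟩
  · rw [dist_nonemptyCompactsOfFinset, hausdorffDist_grid_two_mul hδ.le hN]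
  · rwa [cMag_nonemptyCompactsOfFinset, cMag_nonemptyCompactsOfFinset]

/-- Magnitude is not uniformly continuous on nonempty compact (nor on
nonempty finite) subsets of `[0, ∞)`; in fact uniform continuity fails for every `ε` at
every `δ`. -/
theorem stmt_14 :
    (¬ UniformContinuous
        (fun K : NonemptyCompacts (Set.Ici (0 : ℝ)) => cMag (K : Set (Set.Ici (0 : ℝ))))) ∧
    (¬ UniformContinuous
        (fun F : {K : NonemptyCompacts (Set.Ici (0 : ℝ)) //
            (K : Set (Set.Ici (0 : ℝ))).Finite} =>
          cMag ((F : NonemptyCompacts (Set.Ici (0 : ℝ))) : Set (Set.Ici (0 : ℝ))))) ∧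
    (∀ ε > (0 : ℝ), ∀ δ > (0 : ℝ), ∃ A B : Set ℝ,
      A.Finite ∧ A.Nonempty ∧ A ⊆ Set.Ici (0 : ℝ) ∧
      IsCompact B ∧ B.Nonempty ∧ B ⊆ Set.Ici (0 : ℝ) ∧
      hausdorffDist A B = δ ∧ cMag B - cMag A > ε) := by
  have hfinite : ¬ UniformContinuous
      (fun F : {K : NonemptyCompacts (Set.Ici (0 : ℝ)) // (K : Set (Set.Ici (0 : ℝ))).Finite} =>
        cMag ((F : NonemptyCompacts (Set.Ici (0 : ℝ))) : Set (Set.Ici (0 : ℝ)))) := by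
    rw [Metric.uniformContinuous_iff]
    push Not
    refine ⟨1, one_pos, fun δ hδ => ?_⟩
    obtain ⟨K, L, hK, hL, hKL, hgap⟩ := exists_nonemptyCompacts_Ici_cMag_gap 1 (half_pos hδ)
    refine ⟨⟨K, hK⟩, ⟨L, hL⟩, by rw [Subtype.dist_eq]; linarith, ?_⟩
    rw [Real.dist_eq, abs_sub_comm]
    exact hgap.le.trans (le_abs_self _)
  refine ⟨fun h => hfinite (h.comp uniformContinuous_subtype_val), hfinite, fun ε _ δ hδ => ?_⟩
  obtain ⟨N, hN, hgap⟩ := exists_grid_cMag_gap ε hδ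
  exact ⟨_, _, Finset.finite_toSet _, grid_nonempty, grid_subset_Ici (by positivity),
    (Finset.finite_toSet _).isCompact, grid_nonempty, grid_subset_Ici hδ.le,
    hausdorffDist_grid_two_mul hδ.le hN, hgap⟩
end
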